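/- Let G be the graph on 25 vertices consisting of 5 disjoint 5-cliques where each interior vertex (degree 8) of each clique is adjacent to exactly one interior vertex in each of the other four cliques, and each clique has one exterior vertex (degree 4) adjacent only within its clique. Assuming every locally-optimal coloring assigns a single color to each clique, an assignment of colors to the 5 cliques yields a locally-optimal coloring if and only if it is not the case that exactly four cliques share one color and the fifth has a different color. Consequently LO_k(G) = k^5 − 5k(k−1) and SG_k(G) = k^5 − 5k^2 + 4k. -/

import Mathlib

/-!
For a clique-constant colouring `f ∘ Prod.fst`, the exterior vertex of clique `i` sees only the
four other vertices of its clique, all of its own colour, so it is always satisfied. An interior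
vertex of clique `i` sees four vertices of its own colour plus one vertex of each other clique,
so another colour `d` can only tie with its own colour, and does so exactly when all four other
cliques have colour `d`. So plurality fails precisely for the "four and one"
assignments, and these are parametrised injectively by the odd clique together with an ordered
pair of distinct colours, giving `5 k (k - 1)` of them.
-/

/-- A locally-optimal `k`-coloring: each vertex's own color appears strictly
more often among its neighbors than any other color (plurality). -/
def IsLocOpt {V : Type*} {k : ℕ} (G : SimpleGraph V) (c : V → Fin k) : Prop :=
  ∀ v : V, ∀ d : Fin k, d ≠ c v →
    Nat.card {w : V // G.Adj v w ∧ c w = d} < Nat.card {w : V // G.Adj v w ∧ c w = c v}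

/-- The number of locally-optimal `k`-colorings of `G`. -/
noncomputable def LOcount {V : Type*} (G : SimpleGraph V) (k : ℕ) : ℕ :=
  Nat.card {c : V → Fin k // IsLocOpt G c}

/-- Five 5-cliques (indexed by the first coordinate, with vertex `0` of each
clique the "exterior" vertex): each interior vertex `(i,j)` (`j ≠ 0`) is
adjacent to the corresponding interior vertex `(i',j)` of every other clique. -/
def G9 : SimpleGraph (Fin 5 × Fin 5) :=
  SimpleGraph.fromRel fun x y =>
    (x.1 = y.1 ∧ x.2 ≠ y.2) ∨ (x.1 ≠ y.1 ∧ x.2 = y.2 ∧ x.2 ≠ 0)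

/-- `f` assigns one color to four cliques and a different color to the fifth. -/
def FourOne {k : ℕ} (f : Fin 5 → Fin k) : Prop :=
  ∃ i : Fin 5, (∀ y : Fin 5, y ≠ i → ∀ z : Fin 5, z ≠ i → f y = f z) ∧
    ∀ y : Fin 5, y ≠ i → f y ≠ f i

open Finset

lemma G9_adj_iff {x y : Fin 5 × Fin 5} :
    G9.Adj x y ↔ (x.1 = y.1 ∧ x.2 ≠ y.2) ∨ (x.1 ≠ y.1 ∧ x.2 = y.2 ∧ x.2 ≠ 0) := by
  simp only [G9, SimpleGraph.fromRel_adj]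
  grind

lemma card_G9_adj_comp_fst {k : ℕ} (f : Fin 5 → Fin k) (i j : Fin 5) (d : Fin k) :
    Nat.card {w : Fin 5 × Fin 5 // G9.Adj (i, j) w ∧ f w.1 = d} =
      (if f i = d then 4 else 0) +
        if j = 0 then 0 else #(({i}ᶜ : Finset (Fin 5)).filter (f · = d)) := by
  classical
  -- Split by the clique of the neighbour: clique `i` contributes its other four vertices, each
  -- other clique at most the vertex in position `j`.
  rw [Nat.card_eq_fintype_card, Fintype.card_subtype, card_filter, Fintype.sum_prod_type,
    Fintype.sum_eq_add_sum_compl i]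
  congr 1
  · split_ifs with h
    · simp only [G9_adj_iff, h, true_and, and_true, ne_eq, not_true, false_and, or_false]
      rw [sum_boole, Nat.cast_id]
      simp [← ne_eq, filter_ne]
    · simp [h]
  · rw [card_filter, ← sum_const_zero, ← sum_ite_irrel]
    refine sum_congr rfl fun a ha => ?_
    have hai : i ≠ a := fun h => by simp_all
    split_ifs <;> simp_all [G9_adj_iff]

lemma Finset.card_filter_lt_card_add_card_filter_iff {α : Type*} {s : Finset α}
    {p q : α → Prop} [DecidablePred p] [DecidablePred q] (hpq : ∀ a, p a → ¬q a) :
    #(s.filter p) < #s + #(s.filter q) ↔ ¬∀ a ∈ s, p a := by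
  rw [← card_filter_eq_iff]
  constructor
  · intro hlt hp
    have hq : #(s.filter q) = 0 :=
      card_filter_eq_zero_iff.2 fun a ha => hpq a (card_filter_eq_iff.1 hp a ha)
    omega
  · intro hp
    have := card_filter_le s p
    omega

lemma isLocOpt_G9_comp_fst_iff {k : ℕ} (f : Fin 5 → Fin k) :
    IsLocOpt G9 (fun p => f p.1) ↔ ∀ i, ∀ d ≠ f i, ¬∀ a ≠ i, f a = d := by
  have plurality_iff (i : Fin 5) (d : Fin k) (hd : d ≠ f i) :
      #(({i}ᶜ : Finset (Fin 5)).filter (f · = d)) <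
          4 + #(({i}ᶜ : Finset (Fin 5)).filter (f · = f i)) ↔ ¬∀ a ≠ i, f a = d := by
    have hcard : #({i}ᶜ : Finset (Fin 5)) = 4 := by simp [card_compl]
    rw [← hcard, card_filter_lt_card_add_card_filter_iff fun a ha hb => hd (ha.symm.trans hb)]
    simp
  constructor
  · intro h i d hd
    have := h (i, 1) d hd
    simp only [card_G9_adj_comp_fst, if_neg hd.symm, one_ne_zero, if_false,
      zero_add] at this
    exact (plurality_iff i d hd).1 this
  · rintro h ⟨i, j⟩ d hd
    rw [card_G9_adj_comp_fst, card_G9_adj_comp_fst, if_neg (Ne.symm hd), if_pos rfl]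
    split_ifs
    · norm_num
    · simpa [plurality_iff i d hd] using h i d hd

lemma fourOne_iff {k : ℕ} (f : Fin 5 → Fin k) :
    FourOne f ↔ ∃ i, ∃ d ≠ f i, ∀ a ≠ i, f a = d := by
  constructor
  · rintro ⟨i, hsame, hdiff⟩
    obtain ⟨y, hy⟩ := exists_ne i
    exact ⟨i, f y, hdiff y hy, fun a ha => hsame a ha y hy⟩
  · rintro ⟨i, d, hd, h⟩
    exact ⟨i, fun y hy z hz => (h y hy).trans (h z hz).symm, fun y hy => h y hy ▸ hd⟩

lemma isLocOpt_G9_comp_fst_iff_not_fourOne {k : ℕ} (f : Fin 5 → Fin k) :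
    IsLocOpt G9 (fun p => f p.1) ↔ ¬FourOne f := by
  rw [isLocOpt_G9_comp_fst_iff, fourOne_iff]
  push Not
  rfl

lemma fourOne_iff_exists_update {k : ℕ} (f : Fin 5 → Fin k) :
    FourOne f ↔ ∃ i, ∃ c d, c ≠ d ∧ Function.update (fun _ => d) i c = f := by
  rw [fourOne_iff]
  constructor
  · rintro ⟨i, d, hd, h⟩
    refine ⟨i, f i, d, hd.symm, funext fun a => ?_⟩
    by_cases ha : a = i
    · simp [ha]
    · simp [ha, h a ha]
  · rintro ⟨i, c, d, hcd, rfl⟩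
    exact ⟨i, d, by simpa using hcd.symm, fun a ha => by simp [ha]⟩

lemma eq_of_update_const_eq_update_const {k : ℕ} {i i' : Fin 5} {c d c' d' : Fin k} (hcd : c ≠ d)
    (h : Function.update (fun _ => d) i c = Function.update (fun _ => d') i' c') :
    i = i' ∧ c = c' ∧ d = d' := by
  have avoid_two : ∀ i i' : Fin 5, ∃ y, y ≠ i ∧ y ≠ i' := by decide
  obtain ⟨y, hyi, hyi'⟩ := avoid_two i i'
  have hd : d = d' := by simpa [hyi, hyi'] using congrFun h y
  have hi : i = i' := by
    by_contra hii
    have := congrFun h i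
    simp [hii, hd] at this
    exact hcd (this.trans hd.symm)
  subst hd hi
  exact ⟨rfl, by simpa using congrFun h i, rfl⟩

lemma card_fourOne (k : ℕ) : Nat.card {f : Fin 5 → Fin k // FourOne f} = 5 * (k * k - k) := by
  classical
  let g : Fin 5 × Fin k × Fin k → (Fin 5 → Fin k) := fun x =>
    Function.update (fun _ => x.2.2) x.1 x.2.1
  have hset : (univ.filter FourOne : Finset (Fin 5 → Fin k)) = (univ ×ˢ univ.offDiag).image g := by
    ext f
    simp [g, fourOne_iff_exists_update]
  have hinj : Set.InjOn g (univ ×ˢ univ.offDiag : Finset (Fin 5 × Fin k × Fin k)) := by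
    rintro ⟨i, c, d⟩ hx ⟨i', c', d'⟩ - h
    obtain ⟨rfl, rfl, rfl⟩ := eq_of_update_const_eq_update_const (by simpa using hx) h
    rfl
  rw [Nat.card_eq_fintype_card, Fintype.card_subtype, hset, card_image_of_injOn hinj, card_product,
    offDiag_card]
  simp

lemma card_not_fourOne_add_card_fourOne (k : ℕ) :
    Nat.card {f : Fin 5 → Fin k // ¬FourOne f} + 5 * (k * k - k) = k ^ 5 := by
  classical
  rw [← card_fourOne, Nat.card_eq_fintype_card, Nat.card_eq_fintype_card,
    Fintype.card_subtype_compl, Nat.sub_add_cancel (Fintype.card_subtype_le _)]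
  simp

lemma LOcount_eq_card_comp_fst {V W : Type*} [Nonempty W] (G : SimpleGraph (V × W)) (k : ℕ)
    (hconst : ∀ c : V × W → Fin k, IsLocOpt G c → ∀ v w w', c (v, w) = c (v, w')) :
    LOcount G k = Nat.card {f : V → Fin k // IsLocOpt G (fun p => f p.1)} := by
  let w₀ : W := Classical.arbitrary W
  have hc (c : {c : V × W → Fin k // IsLocOpt G c}) : (fun p : V × W => c.1 (p.1, w₀)) = c.1 :=
    funext fun p => hconst c.1 c.2 p.1 w₀ p.2
  exact Nat.card_congr
    { toFun := fun c => ⟨fun v => c.1 (v, w₀), (hc c).symm ▸ c.2⟩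
      invFun := fun f => ⟨fun p => f.1 p.1, f.2⟩
      left_inv := fun c => Subtype.ext (hc c)
      right_inv := fun _ => rfl }

/-- Assuming every locally-optimal coloring of `G9` is constant on each clique,
an assignment of colors to the five cliques is locally optimal iff it is not of
"four cliques one color, fifth a different color" type; consequently
`LO_k(G9) = k^5 - 5k(k-1)` and `SG_k(G9) = LO_k(G9) - k = k^5 - 5k^2 + 4k`. -/
theorem stmt17 (k : ℕ)
    (hmono : ∀ c : Fin 5 × Fin 5 → Fin k, IsLocOpt G9 c →
      ∀ i j j', c (i, j) = c (i, j')) :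
    (∀ f : Fin 5 → Fin k, IsLocOpt G9 (fun p => f p.1) ↔ ¬FourOne f) ∧
    (LOcount G9 k : ℤ) = (k : ℤ) ^ 5 - 5 * k * ((k : ℤ) - 1) ∧
    (LOcount G9 k : ℤ) - k = (k : ℤ) ^ 5 - 5 * (k : ℤ) ^ 2 + 4 * k := by
  have hLO : LOcount G9 k + 5 * (k * k - k) = k ^ 5 := by
    rw [LOcount_eq_card_comp_fst G9 k hmono,
      Nat.card_congr (Equiv.subtypeEquivRight isLocOpt_G9_comp_fst_iff_not_fourOne),
      card_not_fourOne_add_card_fourOne]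
  have hLO' : (LOcount G9 k : ℤ) = (k : ℤ) ^ 5 - 5 * k * ((k : ℤ) - 1) := by
    zify [Nat.le_mul_self k] at hLO
    linear_combination hLO
  exact ⟨isLocOpt_G9_comp_fst_iff_not_fourOne, hLO', by rw [hLO']; ring⟩
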